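/- Cheeger-type inequality for hypergraph bipartiteness (hard direction): for any non-zero vector f ∈ ℝ^V, there exist disjoint sets L, R ⊆ V, not both empty, such that β_H(L, R) ≤ √(2·D(f)). In particular, if γ_1 = min_f D(f), then there exist disjoint L, R ⊆ V with β_H(L, R) ≤ √(2·γ_1). -/

import Mathlib

open Finset

/-- The degree of a vertex in a hypergraph `(V, E, w)`: the total weight of the edges
containing it. -/
noncomputable def hDeg {V : Type*} [DecidableEq V]
    (E : Finset (Finset V)) (w : Finset V → ℝ) (v : V) : ℝ :=
  ∑ e ∈ E.filter (fun e => v ∈ e), w e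

/-- The volume of a vertex set in a hypergraph. -/
noncomputable def hVol {V : Type*} [DecidableEq V]
    (E : Finset (Finset V)) (w : Finset V → ℝ) (S : Finset V) : ℝ :=
  ∑ v ∈ S, hDeg E w v

/-- `w(A, B | C)`: the total weight of the hyperedges intersecting both `A` and `B`
and avoiding `C`. -/
noncomputable def hCut {V : Type*} [DecidableEq V]
    (E : Finset (Finset V)) (w : Finset V → ℝ) (A B C : Finset V) : ℝ :=
  ∑ e ∈ E, if (e ∩ A).Nonempty ∧ (e ∩ B).Nonempty ∧ e ∩ C = ∅ then w e else 0

/-- The hypergraph bipartiteness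
`β_H(L, R) = (2w(L | V∖L) + 2w(R | V∖R) + w(L, V∖L | R) + w(R, V∖R | L)) / vol(L ∪ R)`. -/
noncomputable def hBip {V : Type*} [Fintype V] [DecidableEq V]
    (E : Finset (Finset V)) (w : Finset V → ℝ) (L R : Finset V) : ℝ :=
  (2 * hCut E w L L Lᶜ + 2 * hCut E w R R Rᶜ +
      hCut E w L Lᶜ R + hCut E w R Rᶜ L) / hVol E w (L ∪ R)

/-- The maximum of `f` over a finite set (zero on the empty set). -/
noncomputable def fmax {V : Type*} (e : Finset V) (f : V → ℝ) : ℝ :=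
  if h : e.Nonempty then e.sup' h f else 0

/-- The minimum of `f` over a finite set (zero on the empty set). -/
noncomputable def fmin {V : Type*} (e : Finset V) (f : V → ℝ) : ℝ :=
  if h : e.Nonempty then e.inf' h f else 0

/-- The discrepancy ratio of a vector `f` with respect to a hypergraph:
`D(f) = (Σ_e w(e)·(max_{u∈e} f(u) + min_{v∈e} f(v))²) / (Σ_v deg(v)·f(v)²)`. -/
noncomputable def hDisc {V : Type*} [Fintype V] [DecidableEq V]
    (E : Finset (Finset V)) (w : Finset V → ℝ) (f : V → ℝ) : ℝ :=
  (∑ e ∈ E, w e * (fmax e f + fmin e f) ^ 2) / (∑ v, hDeg E w v * f v ^ 2)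

/-! Threshold rounding. For `t > 0` put `L_t = {f ≤ -t}` and `R_t = {f ≥ t}`, and draw `t` from
`(0, M]`, `M = max |f|`, with density `2t` (so `t²` is uniform on `(0, M²]`). An edge on which `f`
ranges over `[a, b]` contributes at most `|a + b| (|a| + |b|)` to the expected numerator of
`β_H(L_t, R_t)`, while the expected volume of `L_t ∪ R_t` is `Σ_v deg(v) f(v)²`. Cauchy–Schwarz,
together with `a² + b² ≤ Σ_{v ∈ e} f(v)²` (an edge has two distinct vertices), bounds the former
by `√(2 D(f))` times the latter, so some threshold `t` has `β_H(L_t, R_t) ≤ √(2 D(f))`. -/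

open MeasureTheory

lemma exists_mem_le_of_setIntegral_le {α : Type*} [MeasurableSpace α] {μ : Measure α}
    {s : Set α} {g h : α → ℝ} (hs : μ s ≠ 0) (hs' : μ s ≠ ⊤) (hg : IntegrableOn g s μ)
    (hh : IntegrableOn h s μ) (hle : ∫ t in s, g t ∂μ ≤ ∫ t in s, h t ∂μ) :
    ∃ t ∈ s, g t ≤ h t := by
  obtain ⟨t, ht, hgt⟩ :=
    nonempty_of_measure_ne_zero (measure_le_setAverage_pos hs hs' (hg.sub hh)).ne'
  refine ⟨t, ht, sub_nonpos.1 (hgt.trans ?_)⟩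
  rw [setAverage_eq, Pi.sub_def, integral_sub hg hh, smul_eq_mul]
  exact mul_nonpos_of_nonneg_of_nonpos (inv_nonneg.2 measureReal_nonneg) (sub_nonpos.2 hle)

noncomputable def ramp (c d : ℝ) : ℝ → ℝ := (Set.Ioc c d).indicator fun t => 2 * t

lemma ramp_apply (c d t : ℝ) : ramp c d t = if c < t ∧ t ≤ d then 2 * t else 0 := by
  simp [ramp, Set.indicator_apply]

@[fun_prop]
lemma integrable_ramp (c d : ℝ) (s : Set ℝ) : Integrable (ramp c d) (volume.restrict s) :=
  ((continuous_const.mul continuous_id).integrableOn_Ioc.integrable_indicator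
    measurableSet_Ioc).integrableOn

lemma setIntegral_ramp {c d M : ℝ} (hc : 0 ≤ c) (hd : d ≤ M) :
    ∫ t in Set.Ioc 0 M, ramp c d t = max c d ^ 2 - c ^ 2 := by
  rw [ramp, setIntegral_indicator measurableSet_Ioc,
    Set.inter_eq_right.2 (Set.Ioc_subset_Ioc hc hd)]
  rcases le_total c d with hcd | hdc
  · rw [← intervalIntegral.integral_of_le hcd, intervalIntegral.integral_const_mul, integral_id,
      max_eq_right hcd]
    ring
  · simp [Set.Ioc_eq_empty_of_le hdc, max_eq_left hdc]

/-- For an edge on which `f` ranges over `[a, b]`, the numerator of `β_H` at the threshold `t`,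
weighted by the density `2t`. -/
noncomputable def edgeRamp (a b t : ℝ) : ℝ :=
  2 * ramp 0 (-b) t + 2 * ramp 0 a t + ramp |b| (-a) t + ramp |a| b t

@[fun_prop]
lemma integrable_edgeRamp (a b : ℝ) (s : Set ℝ) :
    Integrable (edgeRamp a b) (volume.restrict s) := by
  unfold edgeRamp
  fun_prop

lemma edgeRamp_mass_le {a b : ℝ} (hab : a ≤ b) :
    2 * (max 0 (-b) ^ 2 - 0 ^ 2) + 2 * (max 0 a ^ 2 - 0 ^ 2) + (max |b| (-a) ^ 2 - |b| ^ 2)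
      + (max |a| b ^ 2 - |a| ^ 2) ≤ |a + b| * (|a| + |b|) := by
  rcases le_total 0 a with ha | ha <;> rcases le_total 0 b with hb | hb <;>
    rcases le_total 0 (a + b) with hs | hs <;>
    simp only [abs_of_nonneg, abs_of_nonpos, ha, hb, hs, max_def] <;>
    split_ifs <;> nlinarith

lemma setIntegral_edgeRamp_le {a b M : ℝ} (hab : a ≤ b) (ha : |a| ≤ M) (hb : |b| ≤ M) :
    ∫ t in Set.Ioc 0 M, edgeRamp a b t ≤ |a + b| * (|a| + |b|) := by
  unfold edgeRamp
  rw [integral_add (by fun_prop) (by fun_prop), integral_add (by fun_prop) (by fun_prop),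
    integral_add (by fun_prop) (by fun_prop), integral_const_mul, integral_const_mul,
    setIntegral_ramp le_rfl ((neg_le_abs b).trans hb), setIntegral_ramp le_rfl
      ((le_abs_self a).trans ha), setIntegral_ramp (abs_nonneg b) ((neg_le_abs a).trans ha),
    setIntegral_ramp (abs_nonneg a) ((le_abs_self b).trans hb)]
  exact edgeRamp_mass_le hab

section Edges

variable {V : Type*}

lemma fmax_eq_sup' {e : Finset V} (he : e.Nonempty) (f : V → ℝ) : fmax e f = e.sup' he f :=
  dif_pos he

lemma fmin_eq_inf' {e : Finset V} (he : e.Nonempty) (f : V → ℝ) : fmin e f = e.inf' he f :=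
  dif_pos he

lemma fmin_le_fmax {e : Finset V} (he : e.Nonempty) (f : V → ℝ) : fmin e f ≤ fmax e f := by
  obtain ⟨v, hv⟩ := he
  rw [fmin_eq_inf' ⟨v, hv⟩, fmax_eq_sup' ⟨v, hv⟩]
  exact (inf'_le f hv).trans (le_sup' f hv)

lemma abs_fmax_le {e : Finset V} (he : e.Nonempty) {f : V → ℝ} {M : ℝ}
    (hM : ∀ v, |f v| ≤ M) : |fmax e f| ≤ M := by
  obtain ⟨v, -, hv⟩ := exists_mem_eq_sup' he f
  rw [fmax_eq_sup' he, hv]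
  exact hM v

lemma abs_fmin_le {e : Finset V} (he : e.Nonempty) {f : V → ℝ} {M : ℝ}
    (hM : ∀ v, |f v| ≤ M) : |fmin e f| ≤ M := by
  obtain ⟨v, -, hv⟩ := exists_mem_eq_inf' he f
  rw [fmin_eq_inf' he, hv]
  exact hM v

lemma sq_fmin_add_sq_fmax_le [DecidableEq V] {e : Finset V} (he : 2 ≤ e.card) (f : V → ℝ) :
    fmin e f ^ 2 + fmax e f ^ 2 ≤ ∑ v ∈ e, f v ^ 2 := by
  have hne : e.Nonempty := card_pos.1 (by omega)
  have pair_le : ∀ x ∈ e, ∀ y ∈ e, x ≠ y → f x ^ 2 + f y ^ 2 ≤ ∑ v ∈ e, f v ^ 2 :=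
    fun x hx y hy hxy => (sum_pair hxy).symm.trans_le <|
      sum_le_sum_of_subset_of_nonneg (insert_subset hx (singleton_subset_iff.2 hy))
        fun v _ _ => sq_nonneg _
  obtain ⟨u, hu, hmin⟩ := exists_mem_eq_inf' hne f
  obtain ⟨u', hu', hmax⟩ := exists_mem_eq_sup' hne f
  rw [fmin_eq_inf' hne, fmax_eq_sup' hne, hmin, hmax]
  rcases eq_or_ne u u' with rfl | huu'
  · -- `f` is constant on `e`, so any second vertex will do
    obtain ⟨x, hx, hxu⟩ := exists_mem_ne (by omega : 1 < e.card) u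
    have hfx : f x = f u :=
      le_antisymm (hmax ▸ le_sup' f hx) (hmin ▸ inf'_le f hx)
    simpa [hfx] using pair_le u hu x hx hxu.symm
  · exact pair_le u hu u' hu' huu'

lemma setIntegral_sum_edgeRamp_le {E : Finset (Finset V)} {w : Finset V → ℝ}
    (hw : ∀ e ∈ E, 0 ≤ w e) (hE : ∀ e ∈ E, e.Nonempty)
    {f : V → ℝ} {M : ℝ} (hM : ∀ v, |f v| ≤ M) :
    ∫ t in Set.Ioc 0 M, ∑ e ∈ E, w e * edgeRamp (fmin e f) (fmax e f) t ≤
      ∑ e ∈ E, w e * (|fmin e f + fmax e f| * (|fmin e f| + |fmax e f|)) := by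
  rw [integral_finsetSum _ fun e _ => (integrable_edgeRamp _ _ _).const_mul (w e)]
  refine sum_le_sum fun e he => ?_
  rw [integral_const_mul]
  exact mul_le_mul_of_nonneg_left (setIntegral_edgeRamp_le (fmin_le_fmax (hE e he) f)
    (abs_fmin_le (hE e he) hM) (abs_fmax_le (hE e he) hM)) (hw e he)

lemma hVol_nonneg [DecidableEq V] {E : Finset (Finset V)} {w : Finset V → ℝ}
    (hw : ∀ e ∈ E, 0 ≤ w e) (S : Finset V) : 0 ≤ hVol E w S :=
  sum_nonneg fun _ _ => sum_nonneg fun e he => hw e (mem_filter.1 he).1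

lemma sum_hDeg_mul [Fintype V] [DecidableEq V] (E : Finset (Finset V)) (w : Finset V → ℝ)
    (g : V → ℝ) :
    ∑ v, hDeg E w v * g v = ∑ e ∈ E, w e * ∑ v ∈ e, g v := by
  simp only [hDeg, sum_filter, sum_mul, mul_sum, ite_mul, zero_mul]
  rw [sum_comm]
  simp

end Edges

section Sweep

variable {V : Type*} [Fintype V]

noncomputable def sweepL (f : V → ℝ) (t : ℝ) : Finset V := univ.filter fun v => f v ≤ -t

noncomputable def sweepR (f : V → ℝ) (t : ℝ) : Finset V := univ.filter fun v => t ≤ f v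

lemma disjoint_sweepL_sweepR (f : V → ℝ) {t : ℝ} (ht : 0 < t) :
    Disjoint (sweepL f t) (sweepR f t) := by
  simp only [sweepL, sweepR, disjoint_filter]
  intro v _ hL hR
  linarith

lemma mem_sweepL_union_sweepR [DecidableEq V] {f : V → ℝ} {t : ℝ} {v : V} :
    v ∈ sweepL f t ∪ sweepR f t ↔ t ≤ |f v| := by
  simp only [sweepL, sweepR, mem_union, mem_filter, mem_univ, true_and, le_abs, le_neg (a := t)]
  exact or_comm

end Sweep

section Cuts

variable {V : Type*} [Fintype V] [DecidableEq V] {e : Finset V} {f : V → ℝ} {t : ℝ}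

lemma inter_sweepL_nonempty_iff (he : e.Nonempty) :
    (e ∩ sweepL f t).Nonempty ↔ fmin e f ≤ -t := by
  simp [Finset.Nonempty, sweepL, fmin_eq_inf' he, inf'_le_iff]

lemma inter_compl_sweepL_nonempty_iff (he : e.Nonempty) :
    (e ∩ (sweepL f t)ᶜ).Nonempty ↔ -t < fmax e f := by
  simp [Finset.Nonempty, sweepL, fmax_eq_sup' he, lt_sup'_iff]

lemma inter_sweepL_eq_empty_iff (he : e.Nonempty) :
    e ∩ sweepL f t = ∅ ↔ -t < fmin e f := by
  simp [eq_empty_iff_forall_notMem, sweepL, fmin_eq_inf' he, lt_inf'_iff]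

lemma inter_compl_sweepL_eq_empty_iff (he : e.Nonempty) :
    e ∩ (sweepL f t)ᶜ = ∅ ↔ fmax e f ≤ -t := by
  simp [eq_empty_iff_forall_notMem, sweepL, fmax_eq_sup' he, sup'_le_iff]

lemma inter_sweepR_nonempty_iff (he : e.Nonempty) :
    (e ∩ sweepR f t).Nonempty ↔ t ≤ fmax e f := by
  simp [Finset.Nonempty, sweepR, fmax_eq_sup' he, le_sup'_iff]

lemma inter_compl_sweepR_nonempty_iff (he : e.Nonempty) :
    (e ∩ (sweepR f t)ᶜ).Nonempty ↔ fmin e f < t := by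
  simp [Finset.Nonempty, sweepR, fmin_eq_inf' he, inf'_lt_iff]

lemma inter_sweepR_eq_empty_iff (he : e.Nonempty) :
    e ∩ sweepR f t = ∅ ↔ fmax e f < t := by
  simp [eq_empty_iff_forall_notMem, sweepR, fmax_eq_sup' he, sup'_lt_iff]

lemma inter_compl_sweepR_eq_empty_iff (he : e.Nonempty) :
    e ∩ (sweepR f t)ᶜ = ∅ ↔ t ≤ fmin e f := by
  simp [eq_empty_iff_forall_notMem, sweepR, fmin_eq_inf' he, le_inf'_iff]

lemma inside_sweepL_iff (he : e.Nonempty) :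
    ((e ∩ sweepL f t).Nonempty ∧ (e ∩ sweepL f t).Nonempty ∧ e ∩ (sweepL f t)ᶜ = ∅) ↔
      t ≤ -fmax e f := by
  rw [inter_sweepL_nonempty_iff he, inter_compl_sweepL_eq_empty_iff he]
  grind [fmin_le_fmax he f]

lemma inside_sweepR_iff (he : e.Nonempty) :
    ((e ∩ sweepR f t).Nonempty ∧ (e ∩ sweepR f t).Nonempty ∧ e ∩ (sweepR f t)ᶜ = ∅) ↔
      t ≤ fmin e f := by
  rw [inter_sweepR_nonempty_iff he, inter_compl_sweepR_eq_empty_iff he]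
  grind [fmin_le_fmax he f]

lemma straddles_sweepL_iff (he : e.Nonempty) :
    ((e ∩ sweepL f t).Nonempty ∧ (e ∩ (sweepL f t)ᶜ).Nonempty ∧ e ∩ sweepR f t = ∅) ↔
      |fmax e f| < t ∧ t ≤ -fmin e f := by
  rw [inter_sweepL_nonempty_iff he, inter_compl_sweepL_nonempty_iff he,
    inter_sweepR_eq_empty_iff he, abs_lt]
  grind

lemma straddles_sweepR_iff (he : e.Nonempty) :
    ((e ∩ sweepR f t).Nonempty ∧ (e ∩ (sweepR f t)ᶜ).Nonempty ∧ e ∩ sweepL f t = ∅) ↔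
      |fmin e f| < t ∧ t ≤ fmax e f := by
  rw [inter_sweepR_nonempty_iff he, inter_compl_sweepR_nonempty_iff he,
    inter_sweepL_eq_empty_iff he, abs_lt]
  grind

end Cuts

section Rounding

variable {V : Type*} [Fintype V] [DecidableEq V] (E : Finset (Finset V)) (w : Finset V → ℝ)

noncomputable def hBipNum (L R : Finset V) : ℝ :=
  2 * hCut E w L L Lᶜ + 2 * hCut E w R R Rᶜ + hCut E w L Lᶜ R + hCut E w R Rᶜ L

lemma hBip_eq_div (L R : Finset V) : hBip E w L R = hBipNum E w L R / hVol E w (L ∪ R) := rfl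

variable {E w}

lemma hBipNum_sweep_mul (hE : ∀ e ∈ E, e.Nonempty) (f : V → ℝ) {t : ℝ} (ht : 0 < t) :
    hBipNum E w (sweepL f t) (sweepR f t) * (2 * t) =
      ∑ e ∈ E, w e * edgeRamp (fmin e f) (fmax e f) t := by
  simp only [hBipNum, hCut, mul_sum, ← sum_add_distrib, sum_mul]
  refine sum_congr rfl fun e he => ?_
  simp only [edgeRamp, ramp_apply, ht, true_and, inside_sweepL_iff (hE e he),
    inside_sweepR_iff (hE e he), straddles_sweepL_iff (hE e he), straddles_sweepR_iff (hE e he)]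
  split_ifs <;> ring

lemma hVol_sweep_mul (f : V → ℝ) {t : ℝ} (ht : 0 < t) :
    hVol E w (sweepL f t ∪ sweepR f t) * (2 * t) = ∑ v, hDeg E w v * ramp 0 |f v| t := by
  simp only [ramp_apply, ht, true_and, ← mem_sweepL_union_sweepR, mul_ite, mul_zero]
  rw [← sum_filter, filter_mem_eq_inter, univ_inter, hVol, sum_mul]

lemma setIntegral_sum_hDeg_ramp {f : V → ℝ} {M : ℝ} (hM : ∀ v, |f v| ≤ M) :
    ∫ t in Set.Ioc 0 M, ∑ v, hDeg E w v * ramp 0 |f v| t = ∑ v, hDeg E w v * f v ^ 2 := by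
  rw [integral_finsetSum _ fun v _ => (integrable_ramp _ _ _).const_mul _]
  refine sum_congr rfl fun v _ => ?_
  rw [integral_const_mul, setIntegral_ramp le_rfl (hM v), max_eq_right (abs_nonneg _), sq_abs]
  ring

lemma sqrt_two_mul_div_mul_self {N d : ℝ} (hd : 0 ≤ d) : √(2 * (N / d)) * d = √(N * (2 * d)) := by
  rw [← Real.sqrt_mul_self hd, ← Real.sqrt_mul' _ (mul_self_nonneg d), Real.sqrt_mul_self hd]
  congr 1
  rcases eq_or_ne d 0 with rfl | hd0
  · simp
  · field_simp

lemma sum_edge_le_sqrt_mul (hw : ∀ e ∈ E, 0 ≤ w e) (hrank : ∀ e ∈ E, 2 ≤ e.card)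
    (f : V → ℝ) :
    ∑ e ∈ E, w e * (|fmin e f + fmax e f| * (|fmin e f| + |fmax e f|)) ≤
      √(2 * hDisc E w f) * ∑ v, hDeg E w v * f v ^ 2 := by
  have hd : 0 ≤ ∑ v, hDeg E w v * f v ^ 2 := by
    rw [sum_hDeg_mul]
    exact sum_nonneg fun e he => mul_nonneg (hw e he) (sum_nonneg fun v _ => sq_nonneg _)
  have hCS := sum_sq_le_sum_mul_sum_of_sq_le_mul E
    (r := fun e => w e * (|fmin e f + fmax e f| * (|fmin e f| + |fmax e f|)))
    (f := fun e => w e * (fmax e f + fmin e f) ^ 2)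
    (g := fun e => w e * (|fmin e f| + |fmax e f|) ^ 2)
    (fun e he => mul_nonneg (hw e he) (sq_nonneg _))
    (fun e he => mul_nonneg (hw e he) (sq_nonneg _))
    (fun e _ => le_of_eq <| by rw [add_comm (fmax e f), ← sq_abs (fmin e f + fmax e f)]; ring)
  have hpair : ∑ e ∈ E, w e * (|fmin e f| + |fmax e f|) ^ 2 ≤
      2 * ∑ v, hDeg E w v * f v ^ 2 := by
    rw [sum_hDeg_mul, mul_sum]
    refine sum_le_sum fun e he => ?_
    have := hw e he
    calc w e * (|fmin e f| + |fmax e f|) ^ 2 ≤ w e * (2 * (|fmin e f| ^ 2 + |fmax e f| ^ 2)) := by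
          gcongr
          exact add_sq_le
      _ ≤ w e * (2 * ∑ v ∈ e, f v ^ 2) := by
          rw [sq_abs, sq_abs]
          gcongr
          exact sq_fmin_add_sq_fmax_le (hrank e he) f
      _ = 2 * (w e * ∑ v ∈ e, f v ^ 2) := by ring
  rw [hDisc, sqrt_two_mul_div_mul_self hd]
  exact Real.le_sqrt_of_sq_le (hCS.trans (mul_le_mul_of_nonneg_left hpair
    (sum_nonneg fun e he => mul_nonneg (hw e he) (sq_nonneg _))))

theorem exists_disjoint_hBip_le_sqrt (hw : ∀ e ∈ E, 0 ≤ w e) (hrank : ∀ e ∈ E, 2 ≤ e.card)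
    {f : V → ℝ} (hf : f ≠ 0) :
    ∃ L R : Finset V, Disjoint L R ∧ (L ∪ R).Nonempty ∧ hBip E w L R ≤ √(2 * hDisc E w f) := by
  have hE : ∀ e ∈ E, e.Nonempty := fun e he => card_pos.1 (by have := hrank e he; omega)
  obtain ⟨v₀, hv₀⟩ := Function.ne_iff.1 hf
  have : Nonempty V := ⟨v₀⟩
  obtain ⟨u, hu⟩ := Finite.exists_max fun v => |f v|
  have hMpos : 0 < |f u| := (abs_pos.2 hv₀).trans_le (hu v₀)
  set K := √(2 * hDisc E w f)
  obtain ⟨t, ⟨ht, htM⟩, hle⟩ := exists_mem_le_of_setIntegral_le (μ := volume)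
    (g := fun t => ∑ e ∈ E, w e * edgeRamp (fmin e f) (fmax e f) t)
    (h := fun t => K * ∑ v, hDeg E w v * ramp 0 |f v| t)
    (by simpa using abs_pos.1 hMpos) (by simp)
    (integrable_finsetSum _ fun e _ => (integrable_edgeRamp _ _ _).const_mul _)
    ((integrable_finsetSum _ fun v _ => (integrable_ramp _ _ _).const_mul _).const_mul _)
    (calc _ ≤ _ := setIntegral_sum_edgeRamp_le hw hE hu
      _ ≤ K * ∑ v, hDeg E w v * f v ^ 2 := sum_edge_le_sqrt_mul hw hrank f
      _ = _ := by rw [integral_const_mul, setIntegral_sum_hDeg_ramp hu])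
  refine ⟨sweepL f t, sweepR f t, disjoint_sweepL_sweepR f ht,
    ⟨u, mem_sweepL_union_sweepR.2 htM⟩, ?_⟩
  rw [← hBipNum_sweep_mul hE f ht, ← hVol_sweep_mul f ht, ← mul_assoc K] at hle
  rw [hBip_eq_div]
  exact div_le_of_le_mul₀ (hVol_nonneg hw _) (Real.sqrt_nonneg _)
    (le_of_mul_le_mul_right hle (by positivity))

end Rounding

theorem hypergraph_cheeger_hard_direction_general
    {V : Type*} [Fintype V] [DecidableEq V]
    (E : Finset (Finset V)) (w : Finset V → ℝ)
    (hw : ∀ e ∈ E, 0 ≤ w e)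
    (hrank : ∀ e ∈ E, 2 ≤ e.card) :
    (∀ f : V → ℝ, f ≠ 0 →
      ∃ L R : Finset V, Disjoint L R ∧ (L ∪ R).Nonempty ∧
        hBip E w L R ≤ Real.sqrt (2 * hDisc E w f)) ∧
    (∀ gamma1 : ℝ, (∀ f : V → ℝ, f ≠ 0 → gamma1 ≤ hDisc E w f) →
      (∃ f : V → ℝ, f ≠ 0 ∧ hDisc E w f = gamma1) →
      ∃ L R : Finset V, Disjoint L R ∧ (L ∪ R).Nonempty ∧
        hBip E w L R ≤ Real.sqrt (2 * gamma1)) :=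
  ⟨fun _ hf => exists_disjoint_hBip_le_sqrt hw hrank hf,
    fun _ _ ⟨_, hf, hγ⟩ => hγ ▸ exists_disjoint_hBip_le_sqrt hw hrank hf⟩

/-- **Cheeger-type inequality for hypergraph bipartiteness, hard direction**
(Lemma 7.10): every non-zero vector `f` yields disjoint sets `L, R`, not both empty, with
`β_H(L, R) ≤ √(2·D(f))`; in particular, if `γ₁` is the minimum of the discrepancy ratio
over non-zero vectors, then there are disjoint `L, R` with `β_H(L, R) ≤ √(2·γ₁)`. -/
theorem hypergraph_cheeger_hard_direction
    {V : Type*} [Fintype V] [DecidableEq V]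
    (E : Finset (Finset V)) (w : Finset V → ℝ)
    (hw : ∀ e ∈ E, 0 ≤ w e)
    (hrank : ∀ e ∈ E, 2 ≤ e.card)
    (hdegpos : ∀ v, 0 < hDeg E w v) :
    (∀ f : V → ℝ, f ≠ 0 →
      ∃ L R : Finset V, Disjoint L R ∧ (L ∪ R).Nonempty ∧
        hBip E w L R ≤ Real.sqrt (2 * hDisc E w f)) ∧
    (∀ gamma1 : ℝ, (∀ f : V → ℝ, f ≠ 0 → gamma1 ≤ hDisc E w f) →
      (∃ f : V → ℝ, f ≠ 0 ∧ hDisc E w f = gamma1) →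
      ∃ L R : Finset V, Disjoint L R ∧ (L ∪ R).Nonempty ∧
        hBip E w L R ≤ Real.sqrt (2 * gamma1)) :=
  hypergraph_cheeger_hard_direction_general E w hw hrank
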